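/- Let φ be a norm on ℝ² and let Ω ⊆ ℝ² be a bounded, strictly convex open set. Then there exists a unique Wulff ball of radius R_Ω contained in Ω, i.e. there is exactly one x ∈ Ω with W_{R_Ω}(x) ⊆ Ω, and moreover Ω^{R_Ω} = W_{R_Ω}(x) for this x. -/

import Mathlib

open MeasureTheory Set ENNReal Filter

noncomputable section

/-- `φ` is a norm on `ℝⁿ` (represented as `Fin n → ℝ`). -/
structure IsNorm {n : ℕ} (φ : (Fin n → ℝ) → ℝ) : Prop where
  nonneg : ∀ x, 0 ≤ φ x
  eq_zero_iff : ∀ x, φ x = 0 ↔ x = 0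
  smul_eq : ∀ (a : ℝ) (x : Fin n → ℝ), φ (a • x) = |a| * φ x
  add_le : ∀ x y, φ (x + y) ≤ φ x + φ y

/-- The divergence of a vector field `η : ℝⁿ → ℝⁿ`. -/
def diverg {n : ℕ} (η : (Fin n → ℝ) → (Fin n → ℝ)) (x : Fin n → ℝ) : ℝ :=
  ∑ i, fderiv ℝ η x (Pi.single i 1) i

/-- The anisotropic total variation `∫ φ*(Du)` of `u : ℝⁿ → ℝ`:
`sup { ∫ u div η dx : η ∈ C¹_c(ℝⁿ;ℝⁿ), φ(η(x)) ≤ 1 ∀ x }`, as an extended real. -/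
def anisoTV {n : ℕ} (φ : (Fin n → ℝ) → ℝ) (u : (Fin n → ℝ) → ℝ) : ℝ≥0∞ :=
  ⨆ η ∈ {η : (Fin n → ℝ) → (Fin n → ℝ) |
      ContDiff ℝ 1 η ∧ HasCompactSupport η ∧ ∀ x, φ (η x) ≤ 1},
    ENNReal.ofReal (∫ x, u x * diverg η x)

/-- `u ∈ BV(ℝⁿ)` (with respect to the anisotropic total variation). -/
def IsBV {n : ℕ} (φ : (Fin n → ℝ) → ℝ) (u : (Fin n → ℝ) → ℝ) : Prop :=
  Integrable u volume ∧ anisoTV φ u ≠ ⊤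

/-- `u` is admissible for problem (1): `u ∈ BV(ℝⁿ)`, `u = 0` a.e. outside `Ω`,
`u` is a.e. `ℕ`-valued, and `∫_Ω u = m`. -/
def Admissible {n : ℕ} (φ : (Fin n → ℝ) → ℝ) (Ω : Set (Fin n → ℝ)) (m : ℝ)
    (u : (Fin n → ℝ) → ℝ) : Prop :=
  IsBV φ u ∧ (∀ᵐ x ∂volume, x ∉ Ω → u x = 0) ∧
    (∀ᵐ x ∂volume, ∃ k : ℕ, u x = k) ∧ (∫ x in Ω, u x) = m

/-- `u` is a minimizer of problem (1). -/
def IsMinimizer {n : ℕ} (φ : (Fin n → ℝ) → ℝ) (Ω : Set (Fin n → ℝ)) (m : ℝ)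
    (u : (Fin n → ℝ) → ℝ) : Prop :=
  Admissible φ Ω m u ∧ ∀ v, Admissible φ Ω m v → anisoTV φ u ≤ anisoTV φ v

/-- The anisotropic perimeter `P_φ(E)` of a set `E ⊆ ℝⁿ`. -/
def anisoPerimeter {n : ℕ} (φ : (Fin n → ℝ) → ℝ) (E : Set (Fin n → ℝ)) : ℝ≥0∞ :=
  anisoTV φ (E.indicator (1 : (Fin n → ℝ) → ℝ))

/-- The Wulff ball `W_r(x) = {y : φ(y-x) < r}`. -/
def wulffBall {n : ℕ} (φ : (Fin n → ℝ) → ℝ) (x : Fin n → ℝ) (r : ℝ) : Set (Fin n → ℝ) :=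
  {y | φ (y - x) < r}

/-- `E` satisfies the `rW_φ`-condition. -/
def rWCond {n : ℕ} (φ : (Fin n → ℝ) → ℝ) (E : Set (Fin n → ℝ)) (r : ℝ) : Prop :=
  ∀ x ∈ frontier E, ∃ y, wulffBall φ y r ⊆ E ∧ x ∈ frontier (wulffBall φ y r)

/-- The Wulff plaquette `E^r`, the union of all Wulff balls of radius `r` contained
in `E` (with `E^0 = E`). -/
def plaquette {n : ℕ} (φ : (Fin n → ℝ) → ℝ) (E : Set (Fin n → ℝ)) (r : ℝ) :
    Set (Fin n → ℝ) :=
  if r = 0 then E else ⋃ (x) (_ : wulffBall φ x r ⊆ E), wulffBall φ x r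

/-- `R_Ω`: the maximal `R > 0` such that some Wulff ball of radius `R` is contained in `Ω`. -/
def maxInradius {n : ℕ} (φ : (Fin n → ℝ) → ℝ) (Ω : Set (Fin n → ℝ)) : ℝ :=
  sSup {R | 0 < R ∧ ∃ x, wulffBall φ x R ⊆ Ω}

/-- `r_Ω`: the maximal `r > 0` such that `Ω` satisfies the `rW_φ`-condition
(`0` if there is none, since `sSup ∅ = 0`). -/
def maxRollRadius {n : ℕ} (φ : (Fin n → ℝ) → ℝ) (Ω : Set (Fin n → ℝ)) : ℝ :=
  sSup {r | 0 < r ∧ rWCond φ Ω r}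

/-- The set of points of Lebesgue density `1` of `E`. -/
def densityPoints {n : ℕ} (E : Set (Fin n → ℝ)) : Set (Fin n → ℝ) :=
  {x | Tendsto (fun r : ℝ => volume (E ∩ Metric.ball x r) / volume (Metric.ball x r))
    (nhdsWithin 0 (Ioi 0)) (nhds 1)}

/-- `E` is a minimizer of problem (10): the constrained isoperimetric problem
minimizing `P_φ` among measurable subsets of `Ω` of prescribed measure `m`. -/
def IsIsopMinimizer {n : ℕ} (φ : (Fin n → ℝ) → ℝ) (Ω : Set (Fin n → ℝ)) (m : ℝ)
    (E : Set (Fin n → ℝ)) : Prop :=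
  MeasurableSet E ∧ E ⊆ Ω ∧ (volume E).toReal = m ∧
    ∀ F, MeasurableSet F → F ⊆ Ω → (volume F).toReal = m →
      anisoPerimeter φ E ≤ anisoPerimeter φ F

/-- The Euclidean norm on `ℝ²`. -/
def euclNorm (v : Fin 2 → ℝ) : ℝ := Real.sqrt (v 0 ^ 2 + v 1 ^ 2)

/-- The crystalline norm `φ(ν) = |ν₁| + |ν₂|` on `ℝ²`. -/
def crysNorm (v : Fin 2 → ℝ) : ℝ := |v 0| + |v 1|

/-- The open unit square `(0,1)² ⊆ ℝ²`. -/
def unitSquare : Set (Fin 2 → ℝ) := univ.pi fun _ => Ioo (0 : ℝ) 1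

/-- The closed unit square `[0,1]² ⊆ ℝ²`. -/
def closedUnitSquare : Set (Fin 2 → ℝ) := univ.pi fun _ => Icc (0 : ℝ) 1

/-- `j` is the essential supremum `‖u‖_∞` of `u`. -/
def IsEssSup (u : (Fin 2 → ℝ) → ℝ) (j : ℕ) : Prop :=
  (∀ᵐ x ∂volume, u x ≤ (j : ℝ)) ∧ ∀ c : ℝ, (∀ᵐ x ∂volume, u x ≤ c) → (j : ℝ) ≤ c

/-
The Wulff balls of radius `r` inside `Ω` are those whose centre has `φ`-distance at least `r`
from `ℝ² \ Ω`, a closed condition on the pair (centre, radius); with the compactness of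
`closure Ω` this shows that the largest radius `R_Ω` is attained. If two distinct centres `p`, `q`
both carried a ball of radius `R_Ω` in `Ω`, translate the closed ball of radius `R_Ω` about their
midpoint `m`: any of its points `z` missing `Ω` would be the midpoint of the two points
`p + (z - m)`, `q + (z - m)` of `closure Ω`, and convexity would then put the whole segment between
them into `∂Ω`, which strict convexity forbids. So the closed ball of radius `R_Ω` about `m` lies in
the open set `Ω`, and by compactness so does a slightly larger open ball, contradicting maximality.
-/

section Convex

variable {E : Type*} [AddCommGroup E] [Module ℝ E] [TopologicalSpace E] [IsTopologicalAddGroup E]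
  [ContinuousSMul ℝ E]

theorem Convex.segment_subset_frontier_of_sbtw {s : Set E} (hs : Convex ℝ s) {a b z : E}
    (ha : a ∈ closure s) (hb : b ∈ closure s) (hz : Sbtw ℝ a z b) (hzs : z ∉ interior s) :
    segment ℝ a b ⊆ frontier s := by
  intro w hw
  refine ⟨hs.closure.segment_subset ha hb hw, fun hws => hzs ?_⟩
  rw [mem_segment_iff_wbtw] at hw
  rcases eq_or_ne z w with rfl | hzw
  · exact hws
  have hray : SameRay ℝ (w -ᵥ a) (z -ᵥ a) :=
    hw.sameRay_vsub_left.trans hz.wbtw.sameRay_vsub_left.symm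
      fun h => absurd (vsub_eq_zero_iff_eq.1 h).symm hz.left_ne_right
  rcases wbtw_total_of_sameRay_vsub_left hray with haw | haz
  · exact hs.openSegment_interior_closure_subset_interior hws hb
      (mem_openSegment_of_ne_left_right hzw.symm hz.ne_right.symm
        (mem_segment_iff_wbtw.2 (hz.wbtw.trans_left_right haw)))
  · exact hs.openSegment_closure_interior_subset_interior ha hws
      (mem_openSegment_of_ne_left_right hz.left_ne hzw.symm (mem_segment_iff_wbtw.2 haz))

end Convex

namespace IsNorm

variable {n : ℕ} {φ : (Fin n → ℝ) → ℝ}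

theorem map_zero (hφ : IsNorm φ) : φ 0 = 0 := (hφ.eq_zero_iff 0).2 rfl

theorem pos (hφ : IsNorm φ) {v : Fin n → ℝ} (hv : v ≠ 0) : 0 < φ v :=
  (hφ.nonneg v).lt_of_ne fun h => hv ((hφ.eq_zero_iff v).1 h.symm)

theorem exists_le_mul_norm (hφ : IsNorm φ) : ∃ K > 0, ∀ v, φ v ≤ K * ‖v‖ := by
  classical
  have hsum : 0 ≤ ∑ i, φ (Pi.single i 1) := Finset.sum_nonneg fun i _ => hφ.nonneg _
  refine ⟨∑ i, φ (Pi.single i 1) + 1, by linarith, fun v => ?_⟩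
  calc φ v = φ (∑ i, v i • Pi.single i 1) := by rw [← pi_eq_sum_univ' v]
    _ ≤ ∑ i, φ (v i • Pi.single i 1) :=
      Finset.le_sum_of_subadditive φ hφ.map_zero.le hφ.add_le _ _
    _ = ∑ i, |v i| * φ (Pi.single i 1) := by simp only [hφ.smul_eq]
    _ ≤ ∑ i, ‖v‖ * φ (Pi.single i 1) := Finset.sum_le_sum fun i _ =>
      mul_le_mul_of_nonneg_right (norm_le_pi_norm v i) (hφ.nonneg _)
    _ ≤ (∑ i, φ (Pi.single i 1) + 1) * ‖v‖ := by
      rw [← Finset.mul_sum]; nlinarith [norm_nonneg v]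

theorem continuous (hφ : IsNorm φ) : Continuous φ := by
  obtain ⟨K, -, hK⟩ := hφ.exists_le_mul_norm
  refine (LipschitzWith.of_le_add_mul' K fun x y => ?_).continuous
  calc φ x = φ (y + (x - y)) := by rw [add_sub_cancel]
    _ ≤ φ y + φ (x - y) := hφ.add_le _ _
    _ ≤ φ y + K * dist x y := by rw [dist_eq_norm]; gcongr; exact hK _

theorem exists_mul_norm_le (hφ : IsNorm φ) : ∃ c > 0, ∀ v, c * ‖v‖ ≤ φ v := by
  obtain ⟨c, hc, hle⟩ := (isCompact_sphere (0 : Fin n → ℝ) 1).exists_forall_le'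
    hφ.continuous.continuousOn fun v hv => hφ.pos (ne_zero_of_mem_unit_sphere ⟨v, hv⟩)
  refine ⟨c, hc, fun v => ?_⟩
  rcases eq_or_ne v 0 with rfl | hv
  · simp [hφ.map_zero]
  have hnv : 0 < ‖v‖ := norm_pos_iff.2 hv
  have hcv := hle (‖v‖⁻¹ • v) (by simp [norm_smul, hnv.ne'])
  rw [hφ.smul_eq, abs_of_pos (inv_pos.2 hnv), le_inv_mul_iff₀ hnv] at hcv
  linarith

end IsNorm

section WulffBall

variable {n : ℕ} {φ : (Fin n → ℝ) → ℝ}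

def closedWulffBall (φ : (Fin n → ℝ) → ℝ) (x : Fin n → ℝ) (r : ℝ) : Set (Fin n → ℝ) :=
  {y | φ (y - x) ≤ r}

theorem mem_wulffBall_self (hφ : IsNorm φ) (x : Fin n → ℝ) {r : ℝ} (hr : 0 < r) :
    x ∈ wulffBall φ x r := by
  simp [wulffBall, hφ.map_zero, hr]

theorem wulffBall_subset_iff {Ω : Set (Fin n → ℝ)} {x : Fin n → ℝ} {r : ℝ} :
    wulffBall φ x r ⊆ Ω ↔ ∀ y ∉ Ω, r ≤ φ (y - x) := by
  simp only [subset_def, wulffBall, mem_ofPred_eq]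
  exact forall_congr' fun y => by rw [← not_lt, not_imp_not]

theorem isClosed_setOf_wulffBall_subset (hφ : Continuous φ) (Ω : Set (Fin n → ℝ)) :
    IsClosed {p : (Fin n → ℝ) × ℝ | wulffBall φ p.1 p.2 ⊆ Ω} := by
  have hinter : {p : (Fin n → ℝ) × ℝ | wulffBall φ p.1 p.2 ⊆ Ω} =
      ⋂ y ∈ Ωᶜ, {p | p.2 ≤ φ (y - p.1)} := by
    ext p
    simp [wulffBall_subset_iff]
  rw [hinter]
  exact isClosed_biInter fun y _ =>
    isClosed_le continuous_snd (hφ.comp (continuous_const.sub continuous_fst))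

theorem isCompact_closedWulffBall (hφ : IsNorm φ) (x : Fin n → ℝ) (r : ℝ) :
    IsCompact (closedWulffBall φ x r) := by
  obtain ⟨c, hc, hle⟩ := hφ.exists_mul_norm_le
  refine Metric.isCompact_of_isClosed_isBounded
    (isClosed_le (hφ.continuous.comp (continuous_id.sub continuous_const)) continuous_const)
    ((Metric.isBounded_closedBall (x := x) (r := r / c)).subset fun y hy => ?_)
  rw [Metric.mem_closedBall, dist_eq_norm, le_div_iff₀ hc]
  linarith [hle (y - x), show φ (y - x) ≤ r from hy]

theorem closedWulffBall_subset_closure_wulffBall (hφ : IsNorm φ) (x : Fin n → ℝ) {r : ℝ}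
    (hr : 0 < r) : closedWulffBall φ x r ⊆ closure (wulffBall φ x r) := by
  intro y hy
  have hlim : Tendsto (fun t : ℝ => x + t • (y - x)) (nhdsWithin 1 (Iio 1)) (nhds y) := by
    have hcont : Continuous fun t : ℝ => x + t • (y - x) := by fun_prop
    simpa using (hcont.tendsto 1).mono_left nhdsWithin_le_nhds
  refine mem_closure_of_tendsto hlim ?_
  filter_upwards [Ioo_mem_nhdsLT (show (0 : ℝ) < 1 from one_pos)] with t ht
  show φ (x + t • (y - x) - x) < r
  rw [add_sub_cancel_left, hφ.smul_eq, abs_of_pos ht.1]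
  nlinarith [ht.1, ht.2, show φ (y - x) ≤ r from hy]

theorem exists_wulffBall_subset_of_closedWulffBall_subset (hφ : IsNorm φ)
    {Ω : Set (Fin n → ℝ)} (hΩ : IsOpen Ω) {x : Fin n → ℝ} {r : ℝ}
    (h : closedWulffBall φ x r ⊆ Ω) : ∃ r' > r, wulffBall φ x r' ⊆ Ω := by
  have hfar : ∀ y ∈ Ωᶜ ∩ closedWulffBall φ x (r + 1), r < φ (y - x) :=
    fun y hy => lt_of_not_ge fun hle => hy.1 (h hle)
  obtain ⟨r', hr', hmin⟩ := ((isCompact_closedWulffBall hφ x (r + 1)).inter_left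
    hΩ.isClosed_compl).exists_forall_le'
    (hφ.continuous.comp (continuous_id.sub continuous_const)).continuousOn hfar
  refine ⟨min r' (r + 1), lt_min hr' (by linarith), fun y hy => ?_⟩
  have hy' : φ (y - x) < min r' (r + 1) := hy
  by_contra hyΩ
  exact (hy'.trans_le (min_le_left _ _)).not_ge
    (hmin y ⟨hyΩ, (hy'.trans_le (min_le_right _ _)).le⟩)

end WulffBall

section Inradius

variable {n : ℕ} {φ : (Fin n → ℝ) → ℝ} {Ω : Set (Fin n → ℝ)}

def inradii (φ : (Fin n → ℝ) → ℝ) (Ω : Set (Fin n → ℝ)) : Set ℝ :=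
  {R | 0 < R ∧ ∃ x, wulffBall φ x R ⊆ Ω}

theorem inradii_nonempty (hφ : IsNorm φ) (hΩ : IsOpen Ω) (hne : Ω.Nonempty) :
    (inradii φ Ω).Nonempty := by
  obtain ⟨c, hc, hle⟩ := hφ.exists_mul_norm_le
  obtain ⟨x, hx⟩ := hne
  obtain ⟨ε, hε, hball⟩ := Metric.isOpen_iff.1 hΩ x hx
  refine ⟨c * ε, by positivity, x, fun y hy => hball ?_⟩
  rw [Metric.mem_ball, dist_eq_norm]
  exact lt_of_mul_lt_mul_left ((hle (y - x)).trans_lt hy) hc.le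

theorem bddAbove_inradii [NeZero n] (hφ : IsNorm φ) (hΩ : Bornology.IsBounded Ω) :
    BddAbove (inradii φ Ω) := by
  obtain ⟨K, hK, hle⟩ := hφ.exists_le_mul_norm
  refine ⟨K * Metric.diam Ω / 2, ?_⟩
  rintro r ⟨hr, x, hx⟩
  have hball : Metric.ball x (r / K) ⊆ Ω := fun y hy => hx <| by
    rw [Metric.mem_ball, dist_eq_norm] at hy
    calc φ (y - x) ≤ K * ‖y - x‖ := hle _
      _ < K * (r / K) := by gcongr
      _ = r := by field_simp
  have hdiam := Metric.diam_mono hball hΩ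
  rw [Metric.diam_ball_eq x (by positivity)] at hdiam
  have := mul_le_mul_of_nonneg_left hdiam hK.le
  field_simp at this ⊢
  linarith

theorem exists_isGreatest_inradii [NeZero n] (hφ : IsNorm φ) (hΩo : IsOpen Ω)
    (hΩb : Bornology.IsBounded Ω) (hne : Ω.Nonempty) : ∃ R, IsGreatest (inradii φ Ω) R := by
  obtain ⟨r₀, hr₀, x₀, hx₀⟩ := inradii_nonempty hφ hΩo hne
  obtain ⟨M, hM⟩ := bddAbove_inradii hφ hΩb
  set C := {p : (Fin n → ℝ) × ℝ | wulffBall φ p.1 p.2 ⊆ Ω} ∩ closure Ω ×ˢ Icc 0 M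
  have hC : IsCompact C := (hΩb.isCompact_closure.prod isCompact_Icc).inter_left
    (isClosed_setOf_wulffBall_subset hφ.continuous Ω)
  have hmemC : ∀ x r, 0 < r → wulffBall φ x r ⊆ Ω → (x, r) ∈ C := fun x r hr h =>
    ⟨h, subset_closure (h (mem_wulffBall_self hφ x hr)), hr.le, hM ⟨hr, x, h⟩⟩
  obtain ⟨⟨a, R⟩, ⟨haR, -⟩, hmax⟩ :=
    hC.exists_isMaxOn ⟨_, hmemC x₀ r₀ hr₀ hx₀⟩ continuous_snd.continuousOn
  have hle : ∀ r ∈ inradii φ Ω, r ≤ R := by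
    rintro r ⟨hr, x, hx⟩
    exact hmax (hmemC x r hr hx)
  exact ⟨R, ⟨hr₀.trans_le (hle r₀ ⟨hr₀, x₀, hx₀⟩), a, haR⟩, hle⟩

theorem isGreatest_maxInradius [NeZero n] (hφ : IsNorm φ) (hΩo : IsOpen Ω)
    (hΩb : Bornology.IsBounded Ω) (hne : Ω.Nonempty) :
    IsGreatest (inradii φ Ω) (maxInradius φ Ω) := by
  obtain ⟨R, hR⟩ := exists_isGreatest_inradii hφ hΩo hΩb hne
  rwa [maxInradius, ← inradii, hR.csSup_eq]

end Inradius

theorem closedWulffBall_midpoint_subset {n : ℕ} {φ : (Fin n → ℝ) → ℝ} (hφ : IsNorm φ)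
    {Ω : Set (Fin n → ℝ)} (hΩo : IsOpen Ω) (hΩc : Convex ℝ Ω)
    (hstrict : ∀ x ∈ frontier Ω, ∀ y ∈ frontier Ω, x ≠ y → ¬ segment ℝ x y ⊆ frontier Ω)
    {R : ℝ} (hR : 0 < R) {p q : Fin n → ℝ} (hp : wulffBall φ p R ⊆ Ω)
    (hq : wulffBall φ q R ⊆ Ω) (hpq : p ≠ q) : closedWulffBall φ (midpoint ℝ p q) R ⊆ Ω := by
  intro z hz
  by_contra hzΩ
  set v := z - midpoint ℝ p q
  have hclosure : ∀ x, wulffBall φ x R ⊆ Ω → x + v ∈ closure Ω := fun x hx =>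
    closure_mono hx <| closedWulffBall_subset_closure_wulffBall hφ x hR <| by
      simpa [closedWulffBall, v] using hz
  have hab : p + v ≠ q + v := fun h => hpq (add_right_cancel h)
  have hmid : midpoint ℝ (p + v) (q + v) = z := by
    simp only [v, midpoint_eq_smul_add, invOf_eq_inv]
    module
  have hseg := hΩc.segment_subset_frontier_of_sbtw (hclosure p hp) (hclosure q hq)
    (sbtw_midpoint_of_ne ℝ hab) (by rwa [hmid, hΩo.interior_eq])
  exact hstrict _ (hseg (left_mem_segment ℝ _ _)) _ (hseg (right_mem_segment ℝ _ _)) hab hseg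

theorem plaquette_eq_wulffBall {n : ℕ} {φ : (Fin n → ℝ) → ℝ} {E : Set (Fin n → ℝ)}
    {x : Fin n → ℝ} {r : ℝ} (hr : r ≠ 0) (hx : wulffBall φ x r ⊆ E)
    (huniq : ∀ y, wulffBall φ y r ⊆ E → y = x) : plaquette φ E r = wulffBall φ x r := by
  rw [plaquette, if_neg hr]
  exact (iUnion₂_subset fun y hy => (huniq y hy) ▸ subset_rfl).antisymm
    (subset_iUnion₂ (s := fun y (_ : wulffBall φ y r ⊆ E) => wulffBall φ y r) x hx)

/-- If `Ω ⊆ ℝ²` is a bounded, strictly convex, nonempty open set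
(convex with no nontrivial line segment in its boundary), then there is exactly one
`x` with `W_{R_Ω}(x) ⊆ Ω`; moreover `x ∈ Ω` and `Ω^{R_Ω} = W_{R_Ω}(x)`. -/
theorem strictly_convex_unique_inball (φ : (Fin 2 → ℝ) → ℝ) (hφ : IsNorm φ)
    (Ω : Set (Fin 2 → ℝ)) (hΩopen : IsOpen Ω) (hΩbdd : Bornology.IsBounded Ω)
    (hΩne : Ω.Nonempty) (hΩconv : Convex ℝ Ω)
    (hstrict : ∀ x ∈ frontier Ω, ∀ y ∈ frontier Ω, x ≠ y →
      ¬ segment ℝ x y ⊆ frontier Ω) :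
    (∃! x : Fin 2 → ℝ, wulffBall φ x (maxInradius φ Ω) ⊆ Ω) ∧
    ∀ x : Fin 2 → ℝ, wulffBall φ x (maxInradius φ Ω) ⊆ Ω →
      x ∈ Ω ∧ plaquette φ Ω (maxInradius φ Ω) = wulffBall φ x (maxInradius φ Ω) := by
  obtain ⟨⟨hR, a, ha⟩, hmax⟩ := isGreatest_maxInradius hφ hΩopen hΩbdd hΩne
  have huniq : ∀ p q, wulffBall φ p (maxInradius φ Ω) ⊆ Ω →
      wulffBall φ q (maxInradius φ Ω) ⊆ Ω → p = q := fun p q hp hq => by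
    by_contra hpq
    obtain ⟨R', hR', hsub⟩ := exists_wulffBall_subset_of_closedWulffBall_subset hφ hΩopen
      (closedWulffBall_midpoint_subset hφ hΩopen hΩconv hstrict hR hp hq hpq)
    exact (hmax ⟨hR.trans hR', _, hsub⟩).not_gt hR'
  exact ⟨⟨a, ha, fun y hy => huniq y a hy ha⟩, fun x hx =>
    ⟨hx (mem_wulffBall_self hφ x hR), plaquette_eq_wulffBall hR.ne' hx fun y hy => huniq y x hy hx⟩⟩

end
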